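/- Let k ≥ 1 and let G = ∏_{i ∈ I} S_i be a Cartesian (unrestricted direct) product of nonabelian finite simple groups S_i, with the product topology. If every uniform k-step commutator of G is an FC-element, then G is finite (equivalently, the index set I is finite). -/

import Mathlib

/-- The commutator `[a,b] = a⁻¹ * b⁻¹ * a * b`. -/
def pcomm {G : Type*} [Group G] (a b : G) : G := a⁻¹ * b⁻¹ * a * b

/-- Left-normed commutator `[x₁,…,xₙ]` of a list of group elements
(equal to `1` for the empty list). -/
def lnc {G : Type*} [Group G] : List G → G
  | [] => 1
  | a :: t => t.foldl pcomm a

/-- `p` divides the order of the image of `x` in `G ⧸ N`. -/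
def pDvdOrderInQuot {G : Type*} [Group G] (N : Subgroup G) [N.Normal] (x : G) (p : ℕ) :
    Prop :=
  p ∣ orderOf (QuotientGroup.mk' N x)

/-- `π(x)`: the set of primes dividing the order of the image of `x` in some
quotient of `G` by an open normal subgroup (i.e. in some finite continuous
quotient, when `G` is profinite). -/
def primesOf {G : Type*} [Group G] [TopologicalSpace G] (x : G) : Set ℕ :=
  {p | p.Prime ∧ ∃ (N : Subgroup G) (hN : N.Normal), IsOpen (N : Set G) ∧
    @pDvdOrderInQuot G _ N hN x p}

/-- `g` is a uniform `k`-step commutator: `g = [x₁,…,x_k]` (left-normed) with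
`π(x₁) = ⋯ = π(x_k)`. -/
def IsUniformCommutator {G : Type*} [Group G] [TopologicalSpace G] (k : ℕ) (g : G) : Prop :=
  ∃ x : Fin k → G, (∀ i j, primesOf (x i) = primesOf (x j)) ∧ g = lnc (List.ofFn x)

/-- An element is an FC-element if its conjugacy class is finite. -/
def IsFCElement {G : Type*} [Group G] (x : G) : Prop :=
  {y : G | ∃ h : G, y = h⁻¹ * x * h}.Finite

/-!
A nonabelian simple group has trivial centre and is the normal closure of any `t ≠ 1`, so
every `w ≠ 1` fails to commute with some conjugate of `t`. Iterating, in each factor one finds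
`[a i, u₁, …, u_{k-1}] ≠ 1` with every `uⱼ` conjugate to a fixed `a i ≠ 1`. Coordinatewise this
is a left-normed commutator `g` of conjugates of `a`, which all share `π(a)`, so `g` is a uniform
`k`-step commutator with no central coordinate. Conjugating `g` in one coordinate at a time gives
distinct conjugates indexed by `I`, so `g` being an FC-element forces `I` to be finite.
-/

open scoped commutatorElement in
lemma pcomm_eq_one_iff {G : Type*} [Group G] {a b : G} : pcomm a b = 1 ↔ Commute a b := by
  rw [show pcomm a b = (⁅a⁻¹, b⁻¹⁆ : G) by simp [pcomm, commutatorElement_def],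
    commutatorElement_eq_one_iff_commute, Commute.inv_inv_iff]

lemma foldl_pcomm_apply {I : Type*} {S : I → Type*} [∀ i, Group (S i)]
    (a : ∀ i, S i) (l : List (∀ i, S i)) (i : I) :
    l.foldl pcomm a i = (l.map fun f => f i).foldl pcomm (a i) := by
  induction l generalizing a with
  | nil => rfl
  | cons b l ih => exact ih (pcomm a b)

lemma lnc_apply {I : Type*} {S : I → Type*} [∀ i, Group (S i)]
    (l : List (∀ i, S i)) (i : I) :
    lnc l i = lnc (l.map fun f => f i) := by
  cases l with
  | nil => rfl
  | cons a l => exact foldl_pcomm_apply a l i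

lemma isConj_pi {I : Type*} {S : I → Type*} [∀ i, Group (S i)] {x y : ∀ i, S i}
    (h : ∀ i, IsConj (x i) (y i)) : IsConj x y := by
  choose c hc using fun i => isConj_iff.mp (h i)
  exact isConj_iff.mpr ⟨c, funext hc⟩

lemma IsConj.orderOf_eq {G : Type*} [Group G] {x y : G} (h : IsConj x y) :
    orderOf x = orderOf y :=
  let ⟨c, hc⟩ := h
  hc.orderOf_eq (c : G)

lemma primesOf_eq_of_isConj {G : Type*} [Group G] [TopologicalSpace G] {x y : G}
    (h : IsConj x y) : primesOf x = primesOf y := by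
  ext p
  simp only [primesOf, pDvdOrderInQuot, Set.mem_ofPred_eq]
  refine and_congr_right fun _ => exists_congr fun N => exists_congr fun _ =>
    and_congr_right fun _ => ?_
  rw [((QuotientGroup.mk' N).map_isConj h).orderOf_eq]

lemma IsSimpleGroup.center_eq_bot {S : Type*} [Group S] [IsSimpleGroup S]
    (hS : ∃ a b : S, a * b ≠ b * a) : Subgroup.center S = ⊥ := by
  obtain ⟨a, b, hab⟩ := hS
  refine (Subgroup.instNormalCenter (G := S)).eq_bot_or_eq_top.resolve_right fun htop => ?_
  exact hab (Subgroup.mem_center_iff.mp (htop ▸ Subgroup.mem_top a) b).symm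

lemma exists_isConj_not_commute {S : Type*} [Group S] [IsSimpleGroup S]
    (hS : Subgroup.center S = ⊥) {t w : S} (ht : t ≠ 1) (hw : w ≠ 1) :
    ∃ u, IsConj t u ∧ ¬Commute w u := by
  by_contra! h
  have hle : Subgroup.normalClosure {t} ≤ Subgroup.centralizer {w} := by
    refine (Subgroup.closure_le _).mpr fun u hu => ?_
    obtain ⟨t', rfl, htu⟩ := Group.mem_conjugatesOfSet_iff.mp hu
    exact Subgroup.mem_centralizer_singleton_iff.mpr (h u htu).symm
  have htop : Subgroup.normalClosure {t} = ⊤ :=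
    Subgroup.normalClosure_normal.eq_bot_or_eq_top.resolve_left fun hbot =>
      ht <| Subgroup.mem_bot.mp <| hbot ▸ Subgroup.subset_normalClosure rfl
  refine hw <| Subgroup.mem_bot.mp <| hS ▸ Subgroup.mem_center_iff.mpr fun s => ?_
  exact Subgroup.mem_centralizer_singleton_iff.mp (hle (htop ▸ Subgroup.mem_top s))

lemma exists_isConj_foldl_pcomm_ne_one {S : Type*} [Group S] [IsSimpleGroup S]
    (hS : Subgroup.center S = ⊥) {t : S} (ht : t ≠ 1) (n : ℕ) {w : S} (hw : w ≠ 1) :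
    ∃ v : Fin n → S, (∀ j, IsConj t (v j)) ∧ (List.ofFn v).foldl pcomm w ≠ 1 := by
  induction n generalizing w with
  | zero => exact ⟨Fin.elim0, fun j => j.elim0, hw⟩
  | succ n ih =>
    obtain ⟨u, htu, hwu⟩ := exists_isConj_not_commute hS ht hw
    obtain ⟨v, htv, hv⟩ := ih (mt pcomm_eq_one_iff.mp hwu)
    exact ⟨Fin.cons u v, Fin.cases htu htv, by simpa [List.ofFn_succ] using hv⟩

lemma finite_of_isFCElement_pi {I : Type*} {S : I → Type*} [∀ i, Group (S i)]
    {g : ∀ i, S i} (hg : ∀ i, g i ∉ Subgroup.center (S i)) (hFC : IsFCElement g) :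
    Finite I := by
  classical
  by_contra hI
  rw [not_finite_iff_infinite] at hI
  have hmove : ∀ i, ∃ s : S i, s⁻¹ * g i * s ≠ g i := by
    intro i
    by_contra! h
    exact hg i <| Subgroup.mem_center_iff.mpr fun s =>
      (inv_mul_eq_iff_eq_mul.mp (by simpa only [mul_assoc] using h s)).symm
  choose s hs using hmove
  refine Set.infinite_of_injective_forall_mem (s := {y | ∃ h, y = h⁻¹ * g * h})
    (f := fun i => (Pi.mulSingle i (s i))⁻¹ * g * Pi.mulSingle i (s i))
    (fun i j hij => ?_) (fun i => ⟨Pi.mulSingle i (s i), rfl⟩) hFC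
  by_contra hne
  have hi := congrFun hij i
  simp only [Pi.mul_apply, Pi.inv_apply, Pi.mulSingle_eq_same, Pi.mulSingle_eq_of_ne hne,
    inv_one, one_mul, mul_one] at hi
  exact hs i hi

theorem stmt14_general {I : Type*} {S : I → Type*} [∀ i, Group (S i)] [∀ i, Finite (S i)]
    [∀ i, TopologicalSpace (S i)]
    [∀ i, IsSimpleGroup (S i)]
    (hnonab : ∀ i, ∃ a b : S i, a * b ≠ b * a)
    (k : ℕ) (hk : 1 ≤ k)
    (hFC : ∀ g : (∀ i, S i), IsUniformCommutator k g → IsFCElement g) :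
    Finite (∀ i, S i) := by
  obtain ⟨m, rfl⟩ : ∃ m, k = m + 1 := ⟨k - 1, by omega⟩
  choose a b hab using hnonab
  have hcenter i : Subgroup.center (S i) = ⊥ := IsSimpleGroup.center_eq_bot ⟨a i, b i, hab i⟩
  have ha i : a i ≠ 1 := fun h => hab i (by simp [h])
  choose v hv_conj hv_ne using fun i =>
    exists_isConj_foldl_pcomm_ne_one (hcenter i) (ha i) m (ha i)
  let x : Fin (m + 1) → ∀ i, S i := Fin.cons a fun j i => v i j
  have hx : ∀ j, IsConj a (x j) :=
    Fin.cases (IsConj.refl a) fun j => isConj_pi fun i => hv_conj i j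
  have hg i : lnc (List.ofFn x) i ∉ Subgroup.center (S i) := by
    rw [hcenter i, Subgroup.mem_bot, lnc_apply]
    simpa [x, List.ofFn_succ, List.map_ofFn, Function.comp_def, lnc] using hv_ne i
  have huc : IsUniformCommutator (m + 1) (lnc (List.ofFn x)) :=
    ⟨x, fun j j' => by rw [← primesOf_eq_of_isConj (hx j), ← primesOf_eq_of_isConj (hx j')],
      rfl⟩
  have : Finite I := finite_of_isFCElement_pi hg (hFC _ huc)
  infer_instance

theorem stmt14 {I : Type*} {S : I → Type*} [∀ i, Group (S i)] [∀ i, Finite (S i)]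
    [∀ i, TopologicalSpace (S i)] [∀ i, DiscreteTopology (S i)]
    [∀ i, IsSimpleGroup (S i)]
    (hnonab : ∀ i, ∃ a b : S i, a * b ≠ b * a)
    (k : ℕ) (hk : 1 ≤ k)
    (hFC : ∀ g : (∀ i, S i), IsUniformCommutator k g → IsFCElement g) :
    Finite (∀ i, S i) :=
  stmt14_general hnonab k hk hFC
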